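/- arXiv:2102.11327 — 2 statements merged into one kernel-verified Lean document; each statement's English description precedes it below -/
import Mathlib

section
/- (Proposition 1, expected pullback metric of a stochastic map) Let ε be a standard Gaussian random vector in ℝ^K (entries independent, mean 0, E[ε_i ε_j] = δ_{ij}), and let J_μ, J_σ ∈ ℝ^{K×d} be fixed matrices. Define the random Jacobian J_f = J_μ + diag(ε) · J_σ, corresponding to the stochastic map f(z) = μ(z) + σ(z) ⊙ ε. Then the expected pullback metric satisfies E[J_fᵀ J_f] = J_μᵀ J_μ + J_σᵀ J_σ. -/
open MeasureTheory Matrix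

/-!
Entrywise, `(J_fᵀ J_f) i j = ∑ k, (Jμ k i + ε k * Jσ k i) * (Jμ k j + ε k * Jσ k j)`. Each summand
is a quadratic polynomial in the single coordinate `ε k`, so its expectation only involves
`E[ε k] = 0` and `E[ε k ^ 2] = 1`: the terms linear in the noise vanish and the quadratic one
contributes `Jσ k i * Jσ k j`.
-/

theorem Matrix.transpose_mul_self_add_diagonal_mul_apply {ι m α : Type*} [Fintype ι]
    [DecidableEq ι] [CommSemiring α] (A B : Matrix ι m α) (e : ι → α) (i j : m) :
    ((A + diagonal e * B)ᵀ * (A + diagonal e * B)) i j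
      = ∑ k, (A k i + e k * B k i) * (A k j + e k * B k j) := by
  rw [mul_apply]
  simp only [transpose_apply, add_apply, diagonal_mul]

section AffineInNoise

theorem affine_mul_affine_eq {R : Type*} [CommRing R] (a b c d x : R) :
    (a + x * b) * (c + x * d) = a * c + (a * d + b * c) * x + b * d * (x * x) := by
  ring

variable {Ω : Type*} [MeasurableSpace Ω] {ℙ : Measure Ω} {X : Ω → ℝ}

theorem integrable_affine_mul_affine [IsFiniteMeasure ℙ] (hX : Integrable X ℙ)
    (hX2 : Integrable (fun ω => X ω * X ω) ℙ) (a b c d : ℝ) :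
    Integrable (fun ω => (a + X ω * b) * (c + X ω * d)) ℙ := by
  simp_rw [affine_mul_affine_eq]
  exact ((integrable_const _).add (hX.const_mul _)).add (hX2.const_mul _)

theorem integral_affine_mul_affine [IsProbabilityMeasure ℙ] (hX : Integrable X ℙ)
    (hX2 : Integrable (fun ω => X ω * X ω) ℙ) (hmean : ∫ ω, X ω ∂ℙ = 0)
    (hvar : ∫ ω, X ω * X ω ∂ℙ = 1) (a b c d : ℝ) :
    ∫ ω, (a + X ω * b) * (c + X ω * d) ∂ℙ = a * c + b * d := by
  simp_rw [affine_mul_affine_eq]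
  rw [integral_add ?_ (hX2.const_mul _),
    integral_add (integrable_const _) (hX.const_mul _), integral_const,
    integral_const_mul, integral_const_mul, hmean, hvar, probReal_univ]
  · ring
  · exact (integrable_const _).add (hX.const_mul _)

end AffineInNoise

/-- Proposition 1, expected pullback metric of a stochastic map:
If `ε` is a standard-Gaussian-like random vector in `ℝ^K` (mean-zero entries,
`E[ε i * ε j] = δ_{ij}`) and `Jμ, Jσ ∈ ℝ^{K×d}` are fixed, then for the random
Jacobian `J_f = Jμ + diag(ε) Jσ` we have `E[J_fᵀ J_f] = Jμᵀ Jμ + Jσᵀ Jσ`. -/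
theorem expected_pullback_metric
    {Ω : Type*} [MeasurableSpace Ω] (ℙ : Measure Ω) [IsProbabilityMeasure ℙ]
    {K d : ℕ} (ε : Ω → Fin K → ℝ)
    (Jμ Jσ : Matrix (Fin K) (Fin d) ℝ)
    (hmean_int : ∀ i, Integrable (fun ω => ε ω i) ℙ)
    (hmean : ∀ i, ∫ ω, ε ω i ∂ℙ = 0)
    (hcov_int : ∀ i j, Integrable (fun ω => ε ω i * ε ω j) ℙ)
    (hcov : ∀ i j, ∫ ω, ε ω i * ε ω j ∂ℙ = if i = j then 1 else 0) :
    (Matrix.of fun i j =>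
        ∫ ω, ((Jμ + Matrix.diagonal (ε ω) * Jσ)ᵀ * (Jμ + Matrix.diagonal (ε ω) * Jσ)) i j ∂ℙ)
      = Jμᵀ * Jμ + Jσᵀ * Jσ := by
  ext i j
  simp only [of_apply, transpose_mul_self_add_diagonal_mul_apply]
  rw [integral_finsetSum _ fun k _ =>
    integrable_affine_mul_affine (hmean_int k) (hcov_int k k) _ _ _ _]
  simp only [integral_affine_mul_affine (hmean_int _) (hcov_int _ _) (hmean _)
    ((hcov _ _).trans (if_pos rfl)), Finset.sum_add_distrib]
  rfl
end

section
/- (Proposition 2, expected pullback metric of the composition of two stochastic maps) Let ε_F ∈ ℝ^ℓ and ε_D ∈ ℝ^K be independent random vectors, each with independent entries of mean 0 and E[ε_i ε_j] = δ_{ij} (e.g., independent standard Gaussians). Let J_{μF}, J_{σF} ∈ ℝ^{ℓ×d} and J_{μD}, J_{σD} ∈ ℝ^{K×ℓ} be fixed matrices, and define the random composite Jacobian J = J_{μD} J_{μF} + J_{μD} diag(ε_F) J_{σF} + diag(ε_D) J_{σD} J_{μF} + diag(ε_D) J_{σD} diag(ε_F) J_{σF}. Then E[Jᵀ J] = J_{μF}ᵀ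 Ḡ J_{μF} + J_{σF}ᵀ diag(Ḡ) J_{σF}, where Ḡ = J_{μD}ᵀ J_{μD} + J_{σD}ᵀ J_{σD} and diag(Ḡ) is the diagonal matrix with the same diagonal as Ḡ. -/
/-!
With `M_F(x) = J_μF + diag(x) J_σF` and `M_D(y) = J_μD + diag(y) J_σD`, the composite Jacobian
factors as `J = M_D(ε_D) M_F(ε_F)`, so `JᵀJ = M_Fᵀ (M_Dᵀ M_D) M_F`. Since `ε_F` and `ε_D` are
independent, the middle factor may be replaced by its expectation. For white noise `ε` only the
diagonal terms of `ε εᵀ` survive in expectation, whence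
`E[(A + diag(ε) B)ᵀ G (A + diag(ε) B)] = Aᵀ G A + Bᵀ diag(G) B`; with `G = 1` this gives
`E[M_Dᵀ M_D] = Ḡ`, and with `G = Ḡ` it gives the claim.
-/

open MeasureTheory Matrix Finset

namespace Matrix

variable {Ω ι n : Type*} [MeasurableSpace Ω]

noncomputable def expectation (μ : Measure Ω) {m : Type*} (M : Ω → Matrix m n ℝ) :
    Matrix m n ℝ :=
  of fun i j => ∫ ω, M ω i j ∂μ

theorem transpose_mul_mul_apply {R : Type*} [CommSemiring R] [Fintype ι]
    (M : Matrix ι n R) (G : Matrix ι ι R) (i j : n) :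
    (Mᵀ * G * M) i j = ∑ p, ∑ q, M p i * M q j * G p q := by
  simp only [mul_apply, transpose_apply, sum_mul]
  rw [sum_comm]
  exact sum_congr rfl fun _ _ => sum_congr rfl fun _ _ => by ring

theorem add_diagonal_mul_apply {R : Type*} [NonUnitalNonAssocSemiring R] [Fintype ι] [DecidableEq ι]
    (A B : Matrix ι n R) (e : ι → R) (p : ι) (i : n) :
    (A + diagonal e * B) p i = A p i + e p * B p i := by
  simp [diagonal_mul]

end Matrix

theorem integral_sum_sum {Ω ι κ : Type*} [MeasurableSpace Ω] {μ : Measure Ω} [Fintype ι]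
    [Fintype κ] {f : ι → κ → Ω → ℝ} (hf : ∀ p q, Integrable (f p q) μ) :
    ∫ ω, ∑ p, ∑ q, f p q ω ∂μ = ∑ p, ∑ q, ∫ ω, f p q ω ∂μ := by
  rw [integral_finsetSum _ fun p _ => integrable_finsetSum _ fun q _ => hf p q]
  exact sum_congr rfl fun p _ => integral_finsetSum _ fun q _ => hf p q

section WhiteNoise

variable {Ω ι : Type*} [MeasurableSpace Ω] {μ : Measure Ω} {ε : Ω → ι → ℝ}

theorem integrable_add_mul_mul_add_mul [IsFiniteMeasure μ]
    (hmean_int : ∀ i, Integrable (fun ω => ε ω i) μ)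
    (hcov_int : ∀ i j, Integrable (fun ω => ε ω i * ε ω j) μ) (p q : ι) (a b c e : ℝ) :
    Integrable (fun ω => (a + ε ω p * b) * (c + ε ω q * e)) μ := by
  have h : (fun ω => (a + ε ω p * b) * (c + ε ω q * e)) = fun ω =>
      (a * c + ε ω p * (b * c)) + (ε ω q * (a * e) + ε ω p * ε ω q * (b * e)) := by
    funext ω; ring
  rw [h]
  exact ((integrable_const _).add ((hmean_int p).mul_const _)).add
    (((hmean_int q).mul_const _).add ((hcov_int p q).mul_const _))

theorem integral_add_mul_mul_add_mul [IsProbabilityMeasure μ] [DecidableEq ι]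
    (hmean_int : ∀ i, Integrable (fun ω => ε ω i) μ) (hmean : ∀ i, ∫ ω, ε ω i ∂μ = 0)
    (hcov_int : ∀ i j, Integrable (fun ω => ε ω i * ε ω j) μ)
    (hcov : ∀ i j, ∫ ω, ε ω i * ε ω j ∂μ = if i = j then 1 else 0) (p q : ι) (a b c e : ℝ) :
    ∫ ω, (a + ε ω p * b) * (c + ε ω q * e) ∂μ = a * c + if p = q then b * e else 0 := by
  have h : (fun ω => (a + ε ω p * b) * (c + ε ω q * e)) = fun ω =>
      (a * c + ε ω p * (b * c)) + (ε ω q * (a * e) + ε ω p * ε ω q * (b * e)) := by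
    funext ω; ring
  have h₁ : Integrable (fun ω => a * c + ε ω p * (b * c)) μ :=
    (integrable_const _).add ((hmean_int p).mul_const _)
  have h₂ : Integrable (fun ω => ε ω q * (a * e) + ε ω p * ε ω q * (b * e)) μ :=
    ((hmean_int q).mul_const _).add ((hcov_int p q).mul_const _)
  rw [h, integral_add h₁ h₂, integral_add (integrable_const _) ((hmean_int p).mul_const _),
    integral_add ((hmean_int q).mul_const _) ((hcov_int p q).mul_const _),
    integral_const, integral_mul_const, integral_mul_const, integral_mul_const,
    hmean, hmean, hcov]
  split_ifs <;> simp

variable [Fintype ι] [DecidableEq ι] {n : Type*}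

theorem integrable_transpose_mul_mul_apply [IsFiniteMeasure μ]
    (hmean_int : ∀ i, Integrable (fun ω => ε ω i) μ)
    (hcov_int : ∀ i j, Integrable (fun ω => ε ω i * ε ω j) μ)
    (A B : Matrix ι n ℝ) (G : Matrix ι ι ℝ) (i j : n) :
    Integrable (fun ω =>
      ((A + diagonal (ε ω) * B)ᵀ * G * (A + diagonal (ε ω) * B)) i j) μ := by
  simp only [transpose_mul_mul_apply, add_diagonal_mul_apply]
  exact integrable_finsetSum _ fun p _ => integrable_finsetSum _ fun q _ =>
    (integrable_add_mul_mul_add_mul hmean_int hcov_int p q _ _ _ _).mul_const _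

theorem expectation_transpose_mul_mul [IsProbabilityMeasure μ]
    (hmean_int : ∀ i, Integrable (fun ω => ε ω i) μ) (hmean : ∀ i, ∫ ω, ε ω i ∂μ = 0)
    (hcov_int : ∀ i j, Integrable (fun ω => ε ω i * ε ω j) μ)
    (hcov : ∀ i j, ∫ ω, ε ω i * ε ω j ∂μ = if i = j then 1 else 0)
    (A B : Matrix ι n ℝ) (G : Matrix ι ι ℝ) :
    expectation μ (fun ω => (A + diagonal (ε ω) * B)ᵀ * G * (A + diagonal (ε ω) * B))
      = Aᵀ * G * A + Bᵀ * diagonal G.diag * B := by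
  ext i j
  have hint := integrable_add_mul_mul_add_mul hmean_int hcov_int (μ := μ)
  have hmoment := integral_add_mul_mul_add_mul hmean_int hmean hcov_int hcov (μ := μ)
  simp only [expectation, of_apply, transpose_mul_mul_apply, add_diagonal_mul_apply]
  calc ∫ ω, ∑ p, ∑ q, (A p i + ε ω p * B p i) * (A q j + ε ω q * B q j) * G p q ∂μ
      = ∑ p, ∑ q, (A p i * A q j + if p = q then B p i * B q j else 0) * G p q := by
        rw [integral_sum_sum fun p q =>
          (hint p q (A p i) (B p i) (A q j) (B q j)).mul_const (G p q)]
        exact sum_congr rfl fun p _ => sum_congr rfl fun q _ => by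
          rw [integral_mul_const, hmoment]
    _ = (Aᵀ * G * A + Bᵀ * diagonal G.diag * B) i j := by
        simp only [Matrix.add_apply, transpose_mul_mul_apply, diagonal_apply, diag_apply,
          add_mul, sum_add_distrib, ite_mul, zero_mul, mul_ite, mul_zero, sum_ite_eq,
          mem_univ, if_true]

theorem expectation_transpose_mul [IsProbabilityMeasure μ]
    (hmean_int : ∀ i, Integrable (fun ω => ε ω i) μ) (hmean : ∀ i, ∫ ω, ε ω i ∂μ = 0)
    (hcov_int : ∀ i j, Integrable (fun ω => ε ω i * ε ω j) μ)
    (hcov : ∀ i j, ∫ ω, ε ω i * ε ω j ∂μ = if i = j then 1 else 0) (A B : Matrix ι n ℝ) :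
    expectation μ (fun ω => (A + diagonal (ε ω) * B)ᵀ * (A + diagonal (ε ω) * B))
      = Aᵀ * A + Bᵀ * B := by
  simpa using expectation_transpose_mul_mul hmean_int hmean hcov_int hcov A B 1

end WhiteNoise

section Independence

variable {Ω α β ι n : Type*} [MeasurableSpace Ω] [MeasurableSpace α] [MeasurableSpace β]
  [Fintype ι] {μ : Measure Ω}

-- `Matrix` carries no measurable structure, so independence is stated for the underlying
-- random variables `x`, `y` of which the random matrices are functions.
theorem expectation_transpose_mul_mul_of_indepFun {x : Ω → α} {y : Ω → β}
    (hxy : ProbabilityTheory.IndepFun x y μ) (X : α → Matrix ι n ℝ) (Y : β → Matrix ι ι ℝ)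
    (hX : ∀ p i, Measurable fun a => X a p i) (hY : ∀ p q, Measurable fun b => Y b p q)
    (hXint : ∀ p q i j, Integrable (fun ω => X (x ω) p i * X (x ω) q j) μ)
    (hYint : ∀ p q, Integrable (fun ω => Y (y ω) p q) μ) :
    expectation μ (fun ω => (X (x ω))ᵀ * Y (y ω) * X (x ω))
      = expectation μ (fun ω => (X (x ω))ᵀ * expectation μ (fun ω => Y (y ω)) * X (x ω)) := by
  ext i j
  have hindep : ∀ p q, ProbabilityTheory.IndepFun (fun ω => X (x ω) p i * X (x ω) q j)
      (fun ω => Y (y ω) p q) μ := fun p q =>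
    hxy.comp (φ := fun a => X a p i * X a q j) ((hX p i).mul (hX q j)) (hY p q)
  simp only [expectation, of_apply, transpose_mul_mul_apply]
  rw [integral_sum_sum (f := fun p q ω => X (x ω) p i * X (x ω) q j * Y (y ω) p q)
      fun p q => (hindep p q).integrable_mul (hXint p q i j) (hYint p q),
    integral_sum_sum fun p q => (hXint p q i j).mul_const _]
  refine sum_congr rfl fun p _ => sum_congr rfl fun q _ => ?_
  rw [(hindep p q).integral_fun_mul_eq_mul_integral (hXint p q i j).1 (hYint p q).1,
    integral_mul_const]

end Independence

theorem expected_pullback_metric_composition_general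
    {Ω : Type*} [MeasurableSpace Ω] (ℙ : Measure Ω) [IsProbabilityMeasure ℙ]
    {l K d : ℕ} (εF : Ω → Fin l → ℝ) (εD : Ω → Fin K → ℝ)
    (JμF JσF : Matrix (Fin l) (Fin d) ℝ) (JμD JσD : Matrix (Fin K) (Fin l) ℝ)
    (hindep : ProbabilityTheory.IndepFun εF εD ℙ)
    (hF_mean_int : ∀ i, Integrable (fun ω => εF ω i) ℙ)
    (hF_mean : ∀ i, ∫ ω, εF ω i ∂ℙ = 0)
    (hF_cov_int : ∀ i j, Integrable (fun ω => εF ω i * εF ω j) ℙ)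
    (hF_cov : ∀ i j, ∫ ω, εF ω i * εF ω j ∂ℙ = if i = j then 1 else 0)
    (hD_mean_int : ∀ i, Integrable (fun ω => εD ω i) ℙ)
    (hD_mean : ∀ i, ∫ ω, εD ω i ∂ℙ = 0)
    (hD_cov_int : ∀ i j, Integrable (fun ω => εD ω i * εD ω j) ℙ)
    (hD_cov : ∀ i j, ∫ ω, εD ω i * εD ω j ∂ℙ = if i = j then 1 else 0)
    (J : Ω → Matrix (Fin K) (Fin d) ℝ)
    (hJ : ∀ ω, J ω = JμD * JμF + JμD * Matrix.diagonal (εF ω) * JσF +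
          Matrix.diagonal (εD ω) * JσD * JμF +
          Matrix.diagonal (εD ω) * JσD * Matrix.diagonal (εF ω) * JσF)
    (Gbar : Matrix (Fin l) (Fin l) ℝ)
    (hGbar : Gbar = JμDᵀ * JμD + JσDᵀ * JσD) :
    (Matrix.of fun i j => ∫ ω, ((J ω)ᵀ * J ω) i j ∂ℙ)
      = JμFᵀ * Gbar * JμF + JσFᵀ * Matrix.diagonal Gbar.diag * JσF := by
  set MF : (Fin l → ℝ) → Matrix (Fin l) (Fin d) ℝ := fun a => JμF + diagonal a * JσF
  set MD : (Fin K → ℝ) → Matrix (Fin K) (Fin l) ℝ := fun b => JμD + diagonal b * JσD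
  have hfactor : ∀ ω, J ω = MD (εD ω) * MF (εF ω) := by
    intro ω
    simp only [hJ, MF, MD, Matrix.mul_add, Matrix.add_mul, Matrix.mul_assoc]
    abel
  have hGbar' : expectation ℙ (fun ω => (MD (εD ω))ᵀ * MD (εD ω)) = Gbar :=
    hGbar ▸ expectation_transpose_mul hD_mean_int hD_mean hD_cov_int hD_cov JμD JσD
  calc (Matrix.of fun i j => ∫ ω, ((J ω)ᵀ * J ω) i j ∂ℙ)
      = expectation ℙ (fun ω => (MF (εF ω))ᵀ * ((MD (εD ω))ᵀ * MD (εD ω)) * MF (εF ω)) := by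
        simp only [expectation, hfactor, transpose_mul, Matrix.mul_assoc]
    _ = expectation ℙ (fun ω => (MF (εF ω))ᵀ * Gbar * MF (εF ω)) := by
        rw [← hGbar']
        refine expectation_transpose_mul_mul_of_indepFun hindep MF (fun b => (MD b)ᵀ * MD b)
          ?_ ?_ ?_ ?_
        · intro p i; simp only [MF, add_diagonal_mul_apply]; fun_prop
        · intro p q; simp only [MD, mul_apply, transpose_apply, add_diagonal_mul_apply]; fun_prop
        · intro p q i j
          simpa only [MF, add_diagonal_mul_apply] using
            integrable_add_mul_mul_add_mul hF_mean_int hF_cov_int p q _ _ _ _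
        · intro p q
          simpa only [Matrix.mul_one] using
            integrable_transpose_mul_mul_apply hD_mean_int hD_cov_int JμD JσD 1 p q
    _ = JμFᵀ * Gbar * JμF + JσFᵀ * Matrix.diagonal Gbar.diag * JσF :=
        expectation_transpose_mul_mul hF_mean_int hF_mean hF_cov_int hF_cov JμF JσF Gbar

/-- Proposition 2, expected pullback metric of the composition of two
stochastic maps: Let `εF ∈ ℝ^l` and `εD ∈ ℝ^K` be independent random vectors, each
with mean-zero entries and `E[ε i * ε j] = δ_{ij}`. For fixed `JμF, JσF ∈ ℝ^{l×d}`
and `JμD, JσD ∈ ℝ^{K×l}`, the random composite Jacobian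
`J = JμD JμF + JμD diag(εF) JσF + diag(εD) JσD JμF + diag(εD) JσD diag(εF) JσF`
satisfies `E[Jᵀ J] = JμFᵀ Ḡ JμF + JσFᵀ diag(Ḡ) JσF` where `Ḡ = JμDᵀ JμD + JσDᵀ JσD`. -/
theorem expected_pullback_metric_composition
    {Ω : Type*} [MeasurableSpace Ω] (ℙ : Measure Ω) [IsProbabilityMeasure ℙ]
    {l K d : ℕ} (εF : Ω → Fin l → ℝ) (εD : Ω → Fin K → ℝ)
    (JμF JσF : Matrix (Fin l) (Fin d) ℝ) (JμD JσD : Matrix (Fin K) (Fin l) ℝ)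
    (hF_meas : Measurable εF) (hD_meas : Measurable εD)
    (hindep : ProbabilityTheory.IndepFun εF εD ℙ)
    (hF_mean_int : ∀ i, Integrable (fun ω => εF ω i) ℙ)
    (hF_mean : ∀ i, ∫ ω, εF ω i ∂ℙ = 0)
    (hF_cov_int : ∀ i j, Integrable (fun ω => εF ω i * εF ω j) ℙ)
    (hF_cov : ∀ i j, ∫ ω, εF ω i * εF ω j ∂ℙ = if i = j then 1 else 0)
    (hD_mean_int : ∀ i, Integrable (fun ω => εD ω i) ℙ)
    (hD_mean : ∀ i, ∫ ω, εD ω i ∂ℙ = 0)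
    (hD_cov_int : ∀ i j, Integrable (fun ω => εD ω i * εD ω j) ℙ)
    (hD_cov : ∀ i j, ∫ ω, εD ω i * εD ω j ∂ℙ = if i = j then 1 else 0)
    (J : Ω → Matrix (Fin K) (Fin d) ℝ)
    (hJ : ∀ ω, J ω = JμD * JμF + JμD * Matrix.diagonal (εF ω) * JσF +
          Matrix.diagonal (εD ω) * JσD * JμF +
          Matrix.diagonal (εD ω) * JσD * Matrix.diagonal (εF ω) * JσF)
    (Gbar : Matrix (Fin l) (Fin l) ℝ)
    (hGbar : Gbar = JμDᵀ * JμD + JσDᵀ * JσD) :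
    (Matrix.of fun i j => ∫ ω, ((J ω)ᵀ * J ω) i j ∂ℙ)
      = JμFᵀ * Gbar * JμF + JσFᵀ * Matrix.diagonal Gbar.diag * JσF :=
  expected_pullback_metric_composition_general ℙ εF εD JμF JσF JμD JσD hindep hF_mean_int hF_mean
    hF_cov_int hF_cov hD_mean_int hD_mean hD_cov_int hD_cov J hJ Gbar hGbar
end
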